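/- With g the sieving map on [0,1]², the Dirac measure δ at s₂ = (1/2,1) is a global SRB measure for g: for every continuous φ: [0,1]² → ℝ and Lebesgue-a.e. (x,p), the Birkhoff averages (1/n)∑_{k=0}^{n-1} φ(g^k(x,p)) converge to φ(s₂). -/

import Mathlib

open Filter MeasureTheory

/-- The sieving map `g` on the unit square `Y = [0,1] × [0,1]`. -/
noncomputable def g : ℝ × ℝ → ℝ × ℝ := fun z =>
  let x := z.1
  let p := z.2
  if p = 1 then (1 / 2, 1)
  else if x < (1 - p) / 2 then (2 * x / (1 - p), p / (1 + p))
  else if x ≤ (1 + p) / 2 then (1 / 2, 1)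
  else (2 * (x - (1 + p) / 2) / (1 - p), p / (1 + p))

open Set Function

/-! Once an orbit reaches the top edge `p = 1` it is at the fixed point `s₂` one step later, so its
Birkhoff averages converge to `φ s₂` for every `φ`. Below the top edge, the two outer pieces of
`[0,1]` at level `p` are stretched affinely onto `[0,1]` at level `q = p / (1 + p)`, each shrinking
Lebesgue measure by the factor `(1 - p) / 2`. Hence the points of level `p` not yet absorbed after
`n + 1` steps have measure at most `1 - p` times those of level `q` after `n` steps, which by
induction is at most `1 / (1 + n p)`. For `p > 0` this tends to `0`, and Fubini over `p` shows that
almost every point of the square is absorbed. -/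

theorem tendsto_birkhoffAverage_of_iterate_eq_fixedPt {α E : Type*} [NormedAddCommGroup E]
    [NormedSpace ℝ E] {f : α → α} {a x : α} (ha : IsFixedPt f a) {N : ℕ} (hN : f^[N] x = a)
    (φ : α → E) : Tendsto (birkhoffAverage ℝ f φ · x) atTop (nhds (φ a)) := by
  refine Tendsto.cesaro_smul (tendsto_atTop_of_eventually_const (i₀ := N) fun k hk => ?_)
  rw [← Nat.sub_add_cancel hk, iterate_add_apply, hN, (ha.iterate _).eq]

lemma g_of_snd_eq_one {z : ℝ × ℝ} (h : z.2 = 1) : g z = (1 / 2, 1) := by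
  simp [g, h]

lemma isFixedPt_g : IsFixedPt g (1 / 2, 1) :=
  g_of_snd_eq_one rfl

lemma measurable_g : Measurable g := by
  refine Measurable.ite ?_ measurable_const
    (Measurable.ite ?_ ?_ (Measurable.ite ?_ measurable_const ?_))
  · exact measurableSet_eq_fun measurable_snd measurable_const
  · exact measurableSet_lt measurable_fst (by fun_prop)
  · fun_prop
  · exact measurableSet_le measurable_fst (by fun_prop)
  · fun_prop

def survivors (p : ℝ) (n : ℕ) : Set ℝ :=
  {x ∈ Icc 0 1 | (g^[n] (x, p)).2 ≠ 1}

/-- The left branch is written with `x - 0` so that `volume_preimage_affine` applies to both. -/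
lemma survivors_succ_subset {p : ℝ} (hp : p < 1) (n : ℕ) :
    survivors p (n + 1) ⊆
      (fun x => 2 * (x - 0) / (1 - p)) ⁻¹' survivors (p / (1 + p)) n ∪
        (fun x => 2 * (x - (1 + p) / 2) / (1 - p)) ⁻¹' survivors (p / (1 + p)) n := by
  rintro x ⟨⟨hx0, hx1⟩, hsurv⟩
  have hp' : 0 < 1 - p := by linarith
  rw [iterate_succ_apply] at hsurv
  by_cases hleft : x < (1 - p) / 2
  · left
    simp only [g, hp.ne, hleft, if_true, if_false] at hsurv
    refine ⟨⟨by positivity, ?_⟩, by simpa using hsurv⟩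
    rw [div_le_one hp']
    linarith
  by_cases hmid : x ≤ (1 + p) / 2
  · simp only [g, hp.ne, hleft, hmid, if_true, if_false, isFixedPt_g.iterate n |>.eq] at hsurv
    exact absurd rfl hsurv
  · right
    simp only [g, hp.ne, hleft, hmid, if_false] at hsurv
    refine ⟨⟨div_nonneg (by linarith) hp'.le, ?_⟩, hsurv⟩
    rw [div_le_one hp']
    linarith

lemma volume_preimage_affine {p : ℝ} (hp : p < 1) (c : ℝ) (s : Set ℝ) :
    volume ((fun x => 2 * (x - c) / (1 - p)) ⁻¹' s) = ENNReal.ofReal ((1 - p) / 2) * volume s := by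
  have hp' : 0 < 1 - p := by linarith
  have hfun : (fun x => 2 * (x - c) / (1 - p)) = (2 / (1 - p) * ·) ∘ (· + -c) := by
    ext x; simp only [comp_apply]; ring
  rw [hfun, preimage_comp, measure_preimage_add_right,
    Real.volume_preimage_mul_left (by positivity), inv_div, abs_of_pos (by positivity)]

lemma volume_survivors_le {p : ℝ} (hp0 : 0 ≤ p) (hp1 : p < 1) (n : ℕ) :
    volume (survivors p n) ≤ ENNReal.ofReal (1 / (1 + n * p)) := by
  induction n generalizing p with
  | zero => simpa [survivors] using measure_mono (μ := volume) (sep_subset (Icc (0 : ℝ) 1) _)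
  | succ n ih =>
    set q := p / (1 + p)
    have hq0 : 0 ≤ q := by positivity
    have hq1 : q < 1 := by rw [div_lt_one (by positivity)]; linarith
    have hbound : (1 - p) / (1 + n * q) ≤ 1 / (1 + (n + 1 : ℕ) * p) := by
      have hq : (1 - p) / (1 + n * q) = (1 - p ^ 2) / (1 + (n + 1) * p) := by
        simp only [q]
        field_simp
        ring
      rw [hq]
      push_cast
      gcongr
      nlinarith
    calc volume (survivors p (n + 1))
        ≤ 2 * (ENNReal.ofReal ((1 - p) / 2) * volume (survivors q n)) := by
          refine (measure_mono (survivors_succ_subset hp1 n)).trans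
            ((measure_union_le _ _).trans ?_)
          rw [volume_preimage_affine hp1, volume_preimage_affine hp1, two_mul]
      _ ≤ 2 * (ENNReal.ofReal ((1 - p) / 2) * ENNReal.ofReal (1 / (1 + n * q))) := by
          gcongr; exact ih hq0 hq1
      _ = ENNReal.ofReal ((1 - p) / (1 + n * q)) := by
          rw [← ENNReal.ofReal_mul (by linarith), ← ENNReal.ofReal_ofNat 2,
            ← ENNReal.ofReal_mul (by norm_num)]
          congr 1
          field_simp
      _ ≤ ENNReal.ofReal (1 / (1 + (n + 1 : ℕ) * p)) := ENNReal.ofReal_le_ofReal hbound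

lemma ae_exists_iterate_snd_eq_one_of_mem_Ioo {p : ℝ} (hp : p ∈ Ioo 0 1) :
    ∀ᵐ x : ℝ, x ∈ Icc 0 1 → ∃ n, (g^[n] (x, p)).2 = 1 := by
  have hlim : Tendsto (fun n : ℕ => ENNReal.ofReal (1 / (1 + n * p))) atTop (nhds 0) := by
    rw [← ENNReal.ofReal_zero]
    refine ENNReal.tendsto_ofReal (tendsto_const_nhds.div_atTop ?_)
    exact tendsto_atTop_add_const_left _ 1 (tendsto_natCast_atTop_atTop.atTop_mul_const hp.1)
  have hnull : volume (⋂ n, survivors p n) = 0 :=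
    le_antisymm (ge_of_tendsto' hlim fun n => (measure_mono (iInter_subset _ n)).trans
      (volume_survivors_le hp.1.le hp.2 n)) zero_le
  filter_upwards [measure_eq_zero_iff_ae_notMem.1 hnull] with x hx hxI
  simp only [survivors, mem_iInter, mem_ofPred_eq, not_forall, not_and, not_not] at hx
  obtain ⟨n, hn⟩ := hx
  exact ⟨n, hn hxI⟩

lemma ae_exists_iterate_snd_eq_one :
    ∀ᵐ z : ℝ × ℝ, z ∈ Icc (0 : ℝ) 1 ×ˢ Icc (0 : ℝ) 1 → ∃ n, (g^[n] z).2 = 1 := by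
  have hmeas : MeasurableSet
      {z : ℝ × ℝ | z ∈ Icc (0 : ℝ) 1 ×ˢ Icc (0 : ℝ) 1 → ∃ n, (g^[n] z).2 = 1} := by
    refine MeasurableSet.imp (measurableSet_Icc.prod measurableSet_Icc) ?_
    rw [ofPred_exists]
    exact MeasurableSet.iUnion fun n =>
      measurableSet_eq_fun (measurable_snd.comp (measurable_g.iterate n)) measurable_const
  rw [Measure.volume_eq_prod, Measure.ae_prod_iff_ae_ae hmeas, Measure.ae_ae_comm hmeas]
  filter_upwards [Measure.ae_ne volume 0] with p hp_ne
  by_cases hp : p ∈ Ioo 0 1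
  · filter_upwards [ae_exists_iterate_snd_eq_one_of_mem_Ioo hp] with x hx hxp
    exact hx (mem_prod.1 hxp).1
  · refine .of_forall fun x hxp => ⟨0, ?_⟩
    obtain ⟨hp0, hp1⟩ := (mem_prod.1 hxp).2
    have hp1' : ¬p < 1 := fun h => hp ⟨hp0.lt_of_ne' hp_ne, h⟩
    exact le_antisymm hp1 (not_lt.1 hp1')

theorem sieving_dirac_is_SRB_general (φ : ℝ × ℝ → ℝ) :
    ∀ᵐ z ∂(volume.restrict (Set.Icc (0 : ℝ) 1 ×ˢ Set.Icc (0 : ℝ) 1)),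
      Tendsto (fun n : ℕ => (n : ℝ)⁻¹ * ∑ k ∈ Finset.range n, φ (g^[k] z))
        atTop (nhds (φ (1 / 2, 1))) := by
  rw [ae_restrict_iff' (measurableSet_Icc.prod measurableSet_Icc)]
  filter_upwards [ae_exists_iterate_snd_eq_one] with z hz hzY
  obtain ⟨N, hN⟩ := hz hzY
  have hfix : g^[N + 1] z = (1 / 2, 1) := by rw [iterate_succ_apply', g_of_snd_eq_one hN]
  exact tendsto_birkhoffAverage_of_iterate_eq_fixedPt isFixedPt_g hfix φ

/-- The Dirac measure at `s₂ = (1/2, 1)` is a global SRB measure for the sieving map `g`: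
for every continuous `φ` and Lebesgue-a.e. point of the unit square, the Birkhoff averages
of `φ` converge to `φ(s₂)`. -/
theorem sieving_dirac_is_SRB (φ : ℝ × ℝ → ℝ) (hφ : Continuous φ) :
    ∀ᵐ z ∂(volume.restrict (Set.Icc (0 : ℝ) 1 ×ˢ Set.Icc (0 : ℝ) 1)),
      Tendsto (fun n : ℕ => (n : ℝ)⁻¹ * ∑ k ∈ Finset.range n, φ (g^[k] z))
        atTop (nhds (φ (1 / 2, 1))) :=
  sieving_dirac_is_SRB_general φ
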